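/- Let p = 17. For every a ∈ F_p*, with b = cr(a⁴·cr(u)), c = -18a³/(325b) where u = 2(18/325)⁴ and cr is the inverse cube map on F_17, the quintic P(x) = x⁵ + a·x² + b·x + c divides some monic projective polynomial H(x) = x¹⁸ + v·x¹⁷ + v·x + z over F_17 with z ≠ v²; hence every root of P is hyperquadratic of order 1 over F_17. -/

import Mathlib

open Polynomial

instance : Fact (Nat.Prime 17) := ⟨by norm_num⟩

/-!
Substituting `x ↦ s x` with `s ≠ 0` sends `x⁵ + a x² + b x + c` to a multiple of
`x⁵ + a s³ x² + b s⁴ x + c s⁵`, and, because `s^q = s` in `𝔽_q`, it sends a projective polynomial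
`x^(q+1) + v x^q + v x + z` to a multiple of `x^(q+1) + v s x^q + v s x + z s²`. Writing `a = s³`
(cubing is bijective on `𝔽₁₇`), the formulas for `b` and `c` give exactly `b = 15 s⁴` and
`c = 13 s⁵`, so every quintic of the family is such a rescaling of the one with `a = 1`, and a
single polynomial division over `𝔽₁₇` settles all of them.
-/

noncomputable section

variable {R : Type*} [CommSemiring R]

def quintic (a b c : R) : R[X] := X ^ 5 + C a * X ^ 2 + C b * X + C c

/-- The projective polynomial `X^(q+1) + v X^q + w X + z` of order `1` in the case `w = v`. -/
def projectivePoly (q : ℕ) (v z : R) : R[X] := X ^ (q + 1) + C v * X ^ q + C v * X + C z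

theorem quintic_comp_C_mul_X (a b c s : R) :
    (quintic (a * s ^ 3) (b * s ^ 4) (c * s ^ 5)).comp (C s * X) = C (s ^ 5) * quintic a b c := by
  simp only [quintic, add_comp, mul_comp, pow_comp, C_comp, X_comp, C_mul, C_pow]
  ring

theorem projectivePoly_comp_C_mul_X {q : ℕ} {s : R} (hs : s ^ q = s) (v z : R) :
    (projectivePoly q (v * s) (z * s ^ 2)).comp (C s * X) = C (s ^ 2) * projectivePoly q v z := by
  have hCs : C s ^ q = C s := by rw [← C_pow, hs]
  simp only [projectivePoly, add_comp, mul_comp, pow_comp, C_comp, X_comp, mul_pow, C_mul, C_pow,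
    pow_succ _ q, hCs]
  ring

end

theorem quintic_dvd_projectivePoly_rescale {K : Type*} [Field K] {q : ℕ} {a b c v z : K}
    (h : quintic a b c ∣ projectivePoly q v z) {s : K} (hs : s ≠ 0) (hsq : s ^ q = s) :
    quintic (a * s ^ 3) (b * s ^ 4) (c * s ^ 5) ∣ projectivePoly q (v * s) (z * s ^ 2) := by
  let := invertibleOfNonzero hs
  rw [← map_dvd_iff (algEquivCMulXAddC s 0)]
  simp only [algEquivCMulXAddC, algEquivOfCompEqX_apply, map_zero, add_zero, ← comp_eq_aeval]
  rw [quintic_comp_C_mul_X, projectivePoly_comp_C_mul_X hsq,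
    (isUnit_C.2 (hs.isUnit.pow 5)).mul_left_dvd, (isUnit_C.2 (hs.isUnit.pow 2)).dvd_mul_left]
  exact h

theorem quintic_one_dvd_projectivePoly :
    quintic (1 : ZMod 17) 15 13 ∣ projectivePoly 17 13 3 :=
  ⟨12 + 12 * X + 14 * X ^ 2 + 13 * X ^ 3 + 14 * X ^ 4 + 12 * X ^ 5 + 9 * X ^ 6 + 2 * X ^ 7 +
      13 * X ^ 8 + 6 * X ^ 9 + 16 * X ^ 10 + 13 * X ^ 12 + X ^ 13, by
    simp only [quintic, projectivePoly, map_ofNat, C_1]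
    ring_nf
    reduce_mod_char⟩

theorem stmt_16 (cr : ZMod 17 → ZMod 17) (hcr : ∀ x, (cr x) ^ 3 = x)
    (u : ZMod 17) (hu : u = 2 * (18 / 325) ^ 4)
    (a : ZMod 17) (ha : a ≠ 0)
    (b c : ZMod 17) (hb : b = cr (a ^ 4 * cr u)) (hc : c = -18 * a ^ 3 / (325 * b)) :
    ∃ v z : ZMod 17, z ≠ v ^ 2 ∧
      (X ^ 5 + C a * X ^ 2 + C b * X + C c : (ZMod 17)[X]) ∣
        (X ^ 18 + C v * X ^ 17 + C v * X + C z) ∧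
      ∀ α : AlgebraicClosure (ZMod 17),
        aeval α (X ^ 5 + C a * X ^ 2 + C b * X + C c : (ZMod 17)[X]) = 0 →
        α ^ 18 + algebraMap (ZMod 17) _ v * α ^ 17
          + algebraMap (ZMod 17) _ v * α + algebraMap (ZMod 17) _ z = 0 := by
  have cube_injective : Function.Injective (fun x : ZMod 17 => x ^ 3) := by decide
  obtain ⟨s, rfl⟩ : ∃ s, a = s ^ 3 := ⟨cr a, (hcr a).symm⟩
  have hs : s ≠ 0 := by rintro rfl; exact ha (zero_pow three_ne_zero)
  have hquot : (18 / 325 : ZMod 17) = 9 := by rw [div_eq_iff (by decide)]; decide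
  have hcru : cr u = 15 ^ 3 := cube_injective (by simp only [hcr, hu, hquot]; decide)
  have hb' : 15 * s ^ 4 = b := cube_injective (by simp only [hb, hcr, hcru]; ring)
  have hc' : 13 * s ^ 5 = c := by
    have hcoeff : (-18 : ZMod 17) = 13 * 325 * 15 := by decide
    have hden : (325 * (15 * s ^ 4) : ZMod 17) ≠ 0 :=
      mul_ne_zero (by decide) (mul_ne_zero (by decide) (pow_ne_zero 4 hs))
    rw [hc, ← hb', eq_div_iff hden]
    linear_combination -s ^ 9 * hcoeff
  have hdvd :=
    quintic_dvd_projectivePoly_rescale quintic_one_dvd_projectivePoly hs (ZMod.pow_card s)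
  rw [one_mul, hb', hc'] at hdvd
  refine ⟨13 * s, 3 * s ^ 2, ?_, hdvd, fun α hα => ?_⟩
  · intro h
    have h0 : (3 - 13 ^ 2) * s ^ 2 = 0 := by linear_combination h
    exact mul_ne_zero (by decide) (pow_ne_zero 2 hs) h0
  · simpa [projectivePoly] using aeval_eq_zero_of_dvd_aeval_eq_zero hdvd hα
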